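/- arXiv:1912.07718 — 5 statements merged into one kernel-verified Lean document; each statement's English description precedes it below -/
import Mathlib

section
/- The symmetrized shuffling operator ν_k on CA^n can be written as ν_k = Σ_{1 ≤ a₁ ≤ ⋯ ≤ a_k ≤ n} (1 / ∏_{j} #{l ∈ [k] : a_l = j}!) · sh_{a₁} ∘ ⋯ ∘ sh_{a_k} ∘ ∂_{a₁} ∘ ⋯ ∘ ∂_{a_k}, where the sum is over weakly increasing k-tuples of letters. -/
/-- Insertion operator: `shOp A a` sends a word `w` (basis element of the free
`ℂ`-vector space on words) to the sum of the words obtained by inserting the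
letter `a` at each of the `w.length + 1` possible positions. -/
noncomputable def shOp (A : Type) [DecidableEq A] (a : A) :
    (List A →₀ ℂ) →ₗ[ℂ] (List A →₀ ℂ) :=
  Finsupp.lift (List A →₀ ℂ) ℂ (List A)
    (fun w => ∑ i : Fin (w.length + 1), Finsupp.single (List.insertIdx w i a) 1)

/-- Deletion operator: `delOp A a` sends a word `w` to the sum, over all positions
`i` with `w_i = a`, of the word obtained by deleting position `i`. -/
noncomputable def delOp (A : Type) [DecidableEq A] (a : A) :
    (List A →₀ ℂ) →ₗ[ℂ] (List A →₀ ℂ) :=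
  Finsupp.lift (List A →₀ ℂ) ℂ (List A)
    (fun w => ∑ i : Fin w.length,
      if w.get i = a then Finsupp.single (w.eraseIdx i) 1 else 0)

/-- Replacement operator: `thetaOp A b a` sends a word `w` to the sum, over all
positions `i` with `w_i = b`, of the word obtained by replacing the letter at
position `i` by `a`. -/
noncomputable def thetaOp (A : Type) [DecidableEq A] (b a : A) :
    (List A →₀ ℂ) →ₗ[ℂ] (List A →₀ ℂ) :=
  Finsupp.lift (List A →₀ ℂ) ℂ (List A)
    (fun w => ∑ i : Fin w.length,
      if w.get i = b then Finsupp.single (w.set i a) 1 else 0)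


/-- Composition `sh_{a₁} ∘ sh_{a₂} ∘ ⋯ ∘ sh_{a_k}` of insertion operators along a list. -/
noncomputable def shChain (A : Type) [DecidableEq A] (l : List A) :
    (List A →₀ ℂ) →ₗ[ℂ] (List A →₀ ℂ) :=
  l.foldr (fun c f => (shOp A c).comp f) LinearMap.id

/-- Composition `∂_{a₁} ∘ ∂_{a₂} ∘ ⋯ ∘ ∂_{a_k}` of deletion operators along a list. -/
noncomputable def delChain (A : Type) [DecidableEq A] (l : List A) :
    (List A →₀ ℂ) →ₗ[ℂ] (List A →₀ ℂ) :=
  l.foldr (fun c f => (delOp A c).comp f) LinearMap.id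

open scoped Classical in
/-- The symmetrized shuffling operator
`ν_k = Σ_{1 ≤ a₁ ≤ ⋯ ≤ a_k ≤ n} (1/∏_j #{l : a_l = j}!) · sh_{a₁}∘⋯∘sh_{a_k}∘∂_{a₁}∘⋯∘∂_{a_k}`
on the word algebra over the alphabet `{1,…,n}` (here `Fin n`). -/
noncomputable def nuOp (n k : ℕ) :
    (List (Fin n) →₀ ℂ) →ₗ[ℂ] (List (Fin n) →₀ ℂ) :=
  ∑ a ∈ Finset.univ.filter (fun a : Fin k → Fin n => Monotone a),
    (((∏ j : Fin n,
        Nat.factorial ((Finset.univ.filter (fun l : Fin k => a l = j)).card) : ℕ) : ℂ))⁻¹ •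
      ((shChain (Fin n) (List.ofFn a)).comp (delChain (Fin n) (List.ofFn a)))

/-- `noninv n k σ` is the number of increasing subsequences of length `k` of `σ ∈ S_n`. -/
def noninv (n k : ℕ) (σ : Equiv.Perm (Fin n)) : ℕ :=
  ((Finset.univ : Finset (Fin n)).powerset.filter
    (fun s => s.card = k ∧ ∀ i ∈ s, ∀ j ∈ s, i < j → σ⁻¹ i < σ⁻¹ j)).card

/-!
Iterated deletion turns `w` into the sum, over injective tuples of positions `φ` with
`w ∘ φ = a`, of `w` with those positions removed; iterated insertion places the letters of `a`
at the positions of an injective tuple `ψ` and the remaining word, in order, on the other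
positions. So the pair `(φ, ψ)` contributes `w · τ`, where `τ` sends `ψ` to `φ` and the
complement of `ψ` increasingly onto the complement of `φ`; for fixed `φ` these `τ` are exactly
the permutations with `τ⁻¹` increasing on the complement `s` of the range of `φ`. Collecting the
coefficient of `w · τ` by `s`, the orderings `φ` of `sᶜ` with `w ∘ φ` weakly increasing number
`∏ⱼ #{x ∈ sᶜ | w x = j}!`, which is exactly the normalisation, so each admissible `s` counts
once and the coefficient is `noninv_{n-k} τ`.
-/

open Finset
open scoped Classical

theorem List.insertIdx_ofFn {A : Type} {m : ℕ} (g : Fin m → A) (i : Fin (m + 1)) (x : A) :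
    (List.ofFn g).insertIdx i x = List.ofFn (i.insertNth x g) := by
  refine List.ext_getElem (by simp [List.length_insertIdx_of_le_length, i.is_le]) ?_
  intro j h₁ h₂
  simp only [List.length_ofFn] at h₂
  rw [List.getElem_ofFn]
  rcases lt_trichotomy j i with hj | rfl | hj
  · have e : (⟨j, h₂⟩ : Fin (m + 1)) = i.succAbove ⟨j, by omega⟩ := by
      rw [Fin.succAbove_of_castSucc_lt _ _ (by simpa [Fin.lt_def] using hj)]; rfl
    rw [List.getElem_insertIdx_of_lt hj, List.getElem_ofFn, e, Fin.insertNth_apply_succAbove]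
  · rw [List.getElem_insertIdx_self]
    exact (Fin.insertNth_apply_same (α := fun _ => A) i x g).symm
  · obtain ⟨j, rfl⟩ : ∃ j', j = j' + 1 := ⟨j - 1, by omega⟩
    have e : (⟨j + 1, h₂⟩ : Fin (m + 1)) = i.succAbove ⟨j, by omega⟩ := by
      rw [Fin.succAbove_of_le_castSucc _ _ (by simp [Fin.le_def]; omega)]; rfl
    rw [List.getElem_insertIdx_of_gt hj, List.getElem_ofFn, e, Fin.insertNth_apply_succAbove]
    rfl

theorem List.eraseIdx_ofFn {A : Type} {m : ℕ} (f : Fin (m + 1) → A) (i : Fin (m + 1)) :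
    (List.ofFn f).eraseIdx i = List.ofFn (f ∘ i.succAbove) := by
  refine List.ext_getElem (by simp [List.length_eraseIdx, i.is_le]) ?_
  intro j h₁ h₂
  simp only [List.getElem_eraseIdx, List.getElem_ofFn, Function.comp_apply]
  split_ifs with hj <;> congr 1 <;> ext <;> simp [Fin.succAbove, Fin.lt_def, hj]

theorem Finset.strictMono_comp_orderEmbOfFin_iff {α β : Type*} [LinearOrder α] [Preorder β]
    (s : Finset α) {k : ℕ} (hs : s.card = k) (g : α → β) :
    StrictMono (g ∘ s.orderEmbOfFin hs) ↔ StrictMonoOn g s := by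
  have hr := s.range_orderEmbOfFin hs
  refine ⟨fun hg x hx y hy hxy => ?_, fun hg a b hab => hg (s.orderEmbOfFin_mem hs a)
    (s.orderEmbOfFin_mem hs b) ((s.orderEmbOfFin hs).strictMono hab)⟩
  obtain ⟨a, rfl⟩ : x ∈ Set.range (s.orderEmbOfFin hs) := hr ▸ hx
  obtain ⟨b, rfl⟩ : y ∈ Set.range (s.orderEmbOfFin hs) := hr ▸ hy
  exact hg ((s.orderEmbOfFin hs).lt_iff_lt.1 hxy)

section Operators

variable {A : Type} [DecidableEq A] {m : ℕ}

theorem shOp_single_ofFn (a : A) (g : Fin m → A) :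
    shOp A a (Finsupp.single (List.ofFn g) 1) =
      ∑ i : Fin (m + 1), Finsupp.single (List.ofFn (i.insertNth a g)) 1 := by
  simp only [shOp, Finsupp.lift_apply, Finsupp.sum_single_index, zero_smul, one_smul]
  exact Fintype.sum_equiv (finCongr (by simp)) _ _ fun i =>
    congrArg (Finsupp.single · 1) (List.insertIdx_ofFn g (finCongr (by simp) i) a)

theorem delOp_single_ofFn (a : A) (f : Fin (m + 1) → A) :
    delOp A a (Finsupp.single (List.ofFn f) 1) =
      ∑ i with f i = a, Finsupp.single (List.ofFn (f ∘ i.succAbove)) 1 := by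
  simp only [delOp, Finsupp.lift_apply, Finsupp.sum_single_index, zero_smul, one_smul,
    sum_filter]
  refine Fintype.sum_equiv (finCongr (by simp)) _ _ fun i => ?_
  simp only [List.get_eq_getElem, List.getElem_ofFn]
  exact congrArg (ite _ · 0)
    (congrArg (Finsupp.single · 1) (List.eraseIdx_ofFn f (finCongr (by simp) i)))

theorem shChain_append (l₁ l₂ : List A) :
    shChain A (l₁ ++ l₂) = (shChain A l₁).comp (shChain A l₂) := by
  induction l₁ with
  | nil => exact (LinearMap.id_comp _).symm
  | cons c l ih => exact (congrArg (shOp A c).comp ih).trans (LinearMap.comp_assoc _ _ _).symm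

end Operators

section Complement

/- Sizes are tied by `k + m = M` rather than `m = M - k`, so that the inductions on `k` below
never have to cast between `Fin (M - k)` and `Fin (M - (k + 1) + 1)`. -/
variable {k m M : ℕ}

theorem card_compl_map_univ (φ : Fin k ↪ Fin M) (h : k + m = M) : (univ.map φ)ᶜ.card = m := by
  rw [card_compl, card_map, card_univ, Fintype.card_fin, Fintype.card_fin]; omega

def complEnum (φ : Fin k ↪ Fin M) (h : k + m = M) : Fin m ↪o Fin M :=
  (univ.map φ)ᶜ.orderEmbOfFin (card_compl_map_univ φ h)

variable (φ : Fin k ↪ Fin M) (h : k + m = M)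

theorem complEnum_ne (t : Fin m) (j : Fin k) : complEnum φ h t ≠ φ j := by
  have := (univ.map φ)ᶜ.orderEmbOfFin_mem (card_compl_map_univ φ h) t
  simp only [mem_compl, mem_map, mem_univ, true_and, not_exists] at this
  exact fun e => this j e.symm

theorem complEnum_not_mem_range (t : Fin m) : complEnum φ h t ∉ Set.range φ := by
  rintro ⟨j, hj⟩
  exact complEnum_ne φ h t j hj.symm

theorem exists_complEnum_eq {x : Fin M} (hx : x ∉ Set.range φ) : ∃ t, complEnum φ h t = x := by
  rw [← Set.mem_range, complEnum, range_orderEmbOfFin]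
  simpa using hx

theorem coe_complEnum_eq {g : Fin m → Fin M} (hg : StrictMono g) (hne : ∀ t j, g t ≠ φ j) :
    ⇑(complEnum φ h) = g :=
  (orderEmbOfFin_unique _ (fun t => by simpa using fun j => (hne t j).symm) hg).symm

theorem coe_complEnum_of_range_eq_insert {φ' : Fin (k + 1) ↪ Fin M} (h' : k + 1 + m = M)
    (h₁ : k + (m + 1) = M) (i : Fin (m + 1))
    (hφ' : Set.range φ' = insert (complEnum φ h₁ i) (Set.range φ)) :
    ⇑(complEnum φ' h') = complEnum φ h₁ ∘ i.succAbove := by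
  refine coe_complEnum_eq φ' h' ((complEnum φ h₁).strictMono.comp (Fin.strictMono_succAbove i))
    fun t j e => ?_
  have hj : φ' j ∈ insert (complEnum φ h₁ i) (Set.range φ) := hφ' ▸ Set.mem_range_self j
  rcases hj with hi | ⟨j', hj'⟩
  · exact Fin.succAbove_ne i t ((complEnum φ h₁).injective (e.trans hi))
  · exact complEnum_ne φ h₁ _ j' (e.trans hj'.symm)

noncomputable def sumComplEquiv : Fin k ⊕ Fin m ≃ Fin M :=
  Equiv.ofBijective (Sum.elim φ (complEnum φ h)) <|
    (Fintype.bijective_iff_injective_and_card _).2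
      ⟨φ.injective.sumElim (complEnum φ h).injective fun j t e => complEnum_ne φ h t j e.symm,
        by simp [h]⟩

@[simp] theorem sumComplEquiv_inl (j : Fin k) : sumComplEquiv φ h (.inl j) = φ j := rfl

@[simp] theorem sumComplEquiv_inr (t : Fin m) :
    sumComplEquiv φ h (.inr t) = complEnum φ h t := rfl

@[simp] theorem sumComplEquiv_symm_apply_self (j : Fin k) :
    (sumComplEquiv φ h).symm (φ j) = .inl j :=
  (Equiv.symm_apply_eq _).2 rfl

@[simp] theorem sumComplEquiv_symm_apply_complEnum (t : Fin m) :
    (sumComplEquiv φ h).symm (complEnum φ h t) = .inr t :=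
  (Equiv.symm_apply_eq _).2 rfl

theorem eq_sumElim_comp_sumComplEquiv_symm {A : Type} {H : Fin M → A} {b : Fin k → A}
    {g : Fin m → A} :
    H = Sum.elim b g ∘ (sumComplEquiv φ h).symm ↔ H ∘ φ = b ∧ H ∘ complEnum φ h = g := by
  rw [Equiv.eq_comp_symm, ← Sum.elim_comp_inl_inr (H ∘ _), Sum.elim_eq_iff]
  rfl

theorem sumComplEquiv_trans_perm (σ : Equiv.Perm (Fin M))
    (hσ : StrictMono (σ ∘ complEnum φ h)) :
    sumComplEquiv (φ.trans σ.toEmbedding) h = (sumComplEquiv φ h).trans σ := by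
  have hc : ⇑(complEnum (φ.trans σ.toEmbedding) h) = σ ∘ complEnum φ h :=
    coe_complEnum_eq _ h hσ fun t j e => complEnum_ne φ h t j (σ.injective e)
  ext (j | t)
  · rfl
  · simp [hc]

theorem sum_embedding_eq_sum_perm_strictMonoOn {β : Type*} [AddCommMonoid β]
    (F : Equiv.Perm (Fin M) → β) :
    ∑ ψ : Fin k ↪ Fin M, F ((sumComplEquiv ψ h).symm.trans (sumComplEquiv φ h)) =
      ∑ τ ∈ univ.filter fun τ : Equiv.Perm (Fin M) => StrictMonoOn ⇑τ⁻¹ ↑(univ.map φ)ᶜ,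
        F τ := by
  simp_rw [← Finset.strictMono_comp_orderEmbOfFin_iff _ (card_compl_map_univ φ h)]
  refine sum_nbij' (fun ψ => (sumComplEquiv ψ h).symm.trans (sumComplEquiv φ h))
    (fun τ => φ.trans τ⁻¹.toEmbedding) (fun ψ _ => ?_) (fun _ _ => mem_univ _) (fun ψ _ => ?_)
    (fun τ hτ => ?_) (fun _ _ => rfl)
  · simp only [mem_filter, mem_univ, true_and]
    change StrictMono (_ ∘ complEnum φ h)
    convert (complEnum ψ h).strictMono using 1
    ext t
    simp [Equiv.Perm.inv_def]
  · ext j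
    simp [Equiv.Perm.inv_def]
  · simp only [mem_filter, mem_univ, true_and] at hτ
    rw [sumComplEquiv_trans_perm φ h τ⁻¹ hτ]
    ext x
    simp [Equiv.Perm.inv_def]

end Complement

section Extension

variable {k m M : ℕ} {β : Type*} [AddCommMonoid β]

theorem sum_sum_cons_complEnum (h : k + (m + 1) = M) (F : (Fin (k + 1) ↪ Fin M) → β) :
    ∑ φ : Fin k ↪ Fin M, ∑ t : Fin (m + 1),
      F (Fin.Embedding.cons φ (complEnum_not_mem_range φ h t)) = ∑ φ, F φ := by
  rw [← Fintype.sum_prod_type']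
  refine Fintype.sum_bijective _ ⟨?_, ?_⟩ _ _ fun _ => rfl
  · rintro ⟨φ₁, t₁⟩ ⟨φ₂, t₂⟩ e
    obtain rfl : φ₁ = φ₂ := by
      simpa only [Fin.Embedding.tail_cons] using congrArg Fin.Embedding.tail e
    have e₀ := DFunLike.congr_fun e 0
    simp only [Fin.Embedding.coe_cons, Fin.cons_zero] at e₀
    rw [(complEnum φ₁ h).injective e₀]
  · intro φ
    obtain ⟨t, ht⟩ := exists_complEnum_eq (Fin.Embedding.tail φ) h (x := φ 0)
      fun ⟨j, hj⟩ => Fin.succ_ne_zero j (φ.injective hj)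
    refine ⟨(Fin.Embedding.tail φ, t), DFunLike.ext _ _ (Fin.cases ?_ fun j => ?_)⟩
    · simp [Fin.Embedding.coe_cons, ht]
    · simp [Fin.Embedding.coe_cons, Fin.Embedding.coe_tail, Fin.tail]

theorem sum_sum_snoc_complEnum (h : k + (m + 1) = M) (F : (Fin (k + 1) ↪ Fin M) → β) :
    ∑ φ : Fin k ↪ Fin M, ∑ t : Fin (m + 1),
      F (Fin.Embedding.snoc φ (complEnum_not_mem_range φ h t)) = ∑ φ, F φ := by
  rw [← Fintype.sum_prod_type']
  refine Fintype.sum_bijective _ ⟨?_, ?_⟩ _ _ fun _ => rfl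
  · rintro ⟨φ₁, t₁⟩ ⟨φ₂, t₂⟩ e
    obtain rfl : φ₁ = φ₂ := by
      simpa only [Fin.Embedding.init_snoc] using congrArg Fin.Embedding.init e
    have e₀ := DFunLike.congr_fun e (Fin.last k)
    simp only [Fin.Embedding.coe_snoc, Fin.snoc_last] at e₀
    rw [(complEnum φ₁ h).injective e₀]
  · intro φ
    obtain ⟨t, ht⟩ := exists_complEnum_eq (Fin.Embedding.init φ) h (x := φ (Fin.last k))
      fun ⟨j, hj⟩ => (Fin.castSucc_lt_last j).ne (φ.injective hj)
    refine ⟨(Fin.Embedding.init φ, t), DFunLike.ext _ _ (Fin.lastCases ?_ fun j => ?_)⟩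
    · simp [Fin.Embedding.coe_snoc, ht]
    · simp only [Fin.Embedding.coe_snoc, Fin.snoc_castSucc]
      rfl

theorem sum_embedding_map_univ_eq_sum_perm (T : Finset (Fin M)) (hT : T.card = k)
    (F : (Fin k ↪ Fin M) → β) :
    ∑ φ ∈ univ.filter fun φ : Fin k ↪ Fin M => univ.map φ = T, F φ =
      ∑ π : Equiv.Perm (Fin k), F (π.toEmbedding.trans (T.orderEmbOfFin hT).toEmbedding) := by
  set e := T.orderEmbOfFin hT
  symm
  refine sum_bij (fun π _ => π.toEmbedding.trans e.toEmbedding) (fun π _ => ?_)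
    (fun π₁ _ π₂ _ h => Equiv.ext fun j => e.injective (DFunLike.congr_fun h j))
    (fun φ hφ => ?_) (fun _ _ => rfl)
  · simp [e, ← map_map, map_orderEmbOfFin_univ]
  · simp only [mem_filter, mem_univ, true_and] at hφ
    have hmem (j : Fin k) : φ j ∈ Set.range e := by
      rw [range_orderEmbOfFin, ← hφ]; simp
    choose u hu using hmem
    have hu_inj : Function.Injective u := fun i j h => φ.injective (by rw [← hu, ← hu, h])
    exact ⟨Equiv.ofBijective u (Finite.injective_iff_bijective.1 hu_inj), mem_univ _,
      DFunLike.ext _ _ hu⟩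

end Extension

section Chains

variable {A : Type} [DecidableEq A] {k m M : ℕ}

theorem delChain_single_ofFn (a : Fin k → A) (f : Fin M → A) (h : k + m = M) :
    delChain A (List.ofFn a) (Finsupp.single (List.ofFn f) 1) =
      ∑ φ ∈ univ.filter fun φ : Fin k ↪ Fin M => f ∘ φ = a,
        Finsupp.single (List.ofFn (f ∘ complEnum φ h)) 1 := by
  induction k generalizing m with
  | zero =>
    subst h
    have hc : ⇑(complEnum (default : Fin 0 ↪ Fin (0 + m)) rfl) = Fin.cast (zero_add m).symm :=
      coe_complEnum_eq _ _ (Fin.cast_strictMono _) fun _ j => j.elim0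
    rw [filter_true_of_mem fun (φ : Fin 0 ↪ Fin (0 + m)) _ => Subsingleton.elim (f ∘ ⇑φ) a,
      univ_unique, sum_singleton, hc, List.ofFn_zero]
    exact congrArg (Finsupp.single · 1) (List.ofFn_congr (zero_add m) f)
  | succ k ih =>
    have h₁ : k + (m + 1) = M := by omega
    rw [List.ofFn_succ, sum_filter, ← sum_sum_cons_complEnum h₁]
    change delOp A (a 0) (delChain A _ _) = _
    rw [ih (fun i => a i.succ) h₁, map_sum]
    simp only [delOp_single_ofFn, sum_filter]
    refine sum_congr rfl fun φ _ => ?_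
    have hcons (t : Fin (m + 1)) :
        f ∘ Fin.Embedding.cons φ (complEnum_not_mem_range φ h₁ t) = a ↔
          f ∘ φ = (fun i => a i.succ) ∧ f (complEnum φ h₁ t) = a 0 := by
      simp [funext_iff, Fin.forall_fin_succ, Fin.Embedding.coe_cons, and_comm]
    split_ifs with hφ
    · refine sum_congr rfl fun t _ => if_congr (by rw [hcons, and_iff_right hφ]; rfl) ?_ rfl
      rw [coe_complEnum_of_range_eq_insert φ h h₁ t (by simp [Fin.Embedding.coe_cons])]
      rfl
    · exact (sum_eq_zero fun t _ => if_neg fun e => hφ ((hcons t).1 e).1).symm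

theorem shChain_single_ofFn (b : Fin k → A) (g : Fin m → A) (h : k + m = M) :
    shChain A (List.ofFn b) (Finsupp.single (List.ofFn g) 1) =
      ∑ ψ : Fin k ↪ Fin M,
        Finsupp.single (List.ofFn (Sum.elim b g ∘ (sumComplEquiv ψ h).symm)) 1 := by
  induction k generalizing m with
  | zero =>
    subst h
    have hc : ⇑(complEnum (default : Fin 0 ↪ Fin (0 + m)) rfl) = Fin.cast (zero_add m).symm :=
      coe_complEnum_eq _ _ (Fin.cast_strictMono _) fun _ j => j.elim0
    have hw : Sum.elim b g ∘ (sumComplEquiv default rfl).symm =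
        fun i => g (Fin.cast (zero_add m) i) :=
      ((eq_sumElim_comp_sumComplEquiv_symm _ _).2 ⟨Subsingleton.elim _ _, by rw [hc]; rfl⟩).symm
    rw [univ_unique, sum_singleton, hw, List.ofFn_zero]
    exact congrArg (Finsupp.single · 1) (List.ofFn_congr (zero_add m).symm g)
  | succ k ih =>
    have h₁ : k + (m + 1) = M := by omega
    rw [List.ofFn_succ', List.concat_eq_append, shChain_append, LinearMap.comp_apply,
      ← sum_sum_snoc_complEnum h₁]
    change shChain A _ (shOp A _ _) = _
    simp only [shOp_single_ofFn, map_sum, ih _ _ h₁]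
    rw [sum_comm]
    refine sum_congr rfl fun ψ _ => sum_congr rfl fun i _ => ?_
    refine congrArg (Finsupp.single · 1) (congrArg List.ofFn ?_)
    obtain ⟨hψ, hc⟩ := (eq_sumElim_comp_sumComplEquiv_symm ψ h₁
      (b := fun j => b j.castSucc) (g := i.insertNth (b (Fin.last k)) g)).1 rfl
    refine (eq_sumElim_comp_sumComplEquiv_symm _ h).2 ⟨funext fun j => ?_, ?_⟩
    · cases j using Fin.lastCases
      · simp [Fin.Embedding.coe_snoc]
      · simp [Fin.Embedding.coe_snoc]
    · rw [coe_complEnum_of_range_eq_insert ψ h h₁ i (by simp [Fin.Embedding.coe_snoc])]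
      funext t
      simp

theorem shChain_delChain_single_ofFn (a : Fin k → A) (f : Fin M → A) (h : k + m = M) :
    shChain A (List.ofFn a) (delChain A (List.ofFn a) (Finsupp.single (List.ofFn f) 1)) =
      ∑ φ ∈ univ.filter fun φ : Fin k ↪ Fin M => f ∘ φ = a,
        ∑ τ ∈ univ.filter fun τ : Equiv.Perm (Fin M) => StrictMonoOn ⇑τ⁻¹ ↑(univ.map φ)ᶜ,
          Finsupp.single (List.ofFn (f ∘ τ)) 1 := by
  rw [delChain_single_ofFn a f h, map_sum]
  refine sum_congr rfl fun φ hφ => ?_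
  rw [shChain_single_ofFn a _ h, ← sum_embedding_eq_sum_perm_strictMonoOn φ h]
  refine sum_congr rfl fun ψ _ => ?_
  simp only [mem_filter, mem_univ, true_and] at hφ
  rw [← hφ, ← Sum.comp_elim]
  rfl

end Chains

section Counting

variable {ι β : Type*} [Fintype ι] [Fintype β] [DecidableEq β]

def fiberFactorial (g : ι → β) : ℕ :=
  ∏ j, (#{x | g x = j}).factorial

theorem fiberFactorial_ne_zero (g : ι → β) : fiberFactorial g ≠ 0 :=
  prod_ne_zero_iff.2 fun _ _ => Nat.factorial_ne_zero _

theorem fiberFactorial_comp_perm (g : ι → β) (π : Equiv.Perm ι) :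
    fiberFactorial (g ∘ π) = fiberFactorial g := by
  refine prod_congr rfl fun j _ => congrArg Nat.factorial ?_
  simp only [← Fintype.card_subtype, Function.comp_apply]
  exact Fintype.card_congr (π.subtypeEquiv fun _ => Iff.rfl)

theorem card_perm_comp_eq_self [DecidableEq ι] (g : ι → β) :
    #{π : Equiv.Perm ι | g ∘ π = g} = fiberFactorial g := by
  rw [← Fintype.card_subtype, DomMulAct.stabilizer_card]
  simp only [fiberFactorial, Fintype.card_subtype]

end Counting

section Rearrangements

variable {β : Type*} [LinearOrder β] [Fintype β] {K : Type*} [Field K] [CharZero K] {k M : ℕ}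

theorem card_perm_monotone_comp (g : Fin k → β) :
    #{π : Equiv.Perm (Fin k) | Monotone (g ∘ π)} = fiberFactorial g := by
  set σ := Tuple.sort g
  rw [← card_perm_comp_eq_self g]
  refine card_nbij' (· * σ⁻¹) (· * σ) (fun π hπ => ?_) (fun ρ hρ => ?_)
    (fun π _ => inv_mul_cancel_right π σ) (fun ρ _ => mul_inv_cancel_right ρ σ)
  · simp only [coe_filter, Set.mem_ofPred_eq, mem_univ, true_and,
      ← Tuple.comp_sort_eq_comp_iff_monotone] at hπ ⊢
    rw [Equiv.Perm.coe_mul, ← Function.comp_assoc, hπ, Function.comp_assoc, ← Equiv.Perm.coe_mul,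
      mul_inv_cancel, Equiv.Perm.coe_one, Function.comp_id]
  · simp only [coe_filter, Set.mem_ofPred_eq, mem_univ, true_and,
      ← Tuple.comp_sort_eq_comp_iff_monotone] at hρ ⊢
    rw [Equiv.Perm.coe_mul, ← Function.comp_assoc, hρ]

theorem sum_perm_monotone_inv_fiberFactorial_eq_one (g : Fin k → β) :
    ∑ π ∈ univ.filter fun π : Equiv.Perm (Fin k) => Monotone (g ∘ π),
      (fiberFactorial (g ∘ π) : K)⁻¹ = 1 := by
  simp_rw [fiberFactorial_comp_perm, sum_const, card_perm_monotone_comp, nsmul_eq_mul]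
  exact mul_inv_cancel₀ (Nat.cast_ne_zero.2 (fiberFactorial_ne_zero g))

theorem sum_monotone_embedding_inv_fiberFactorial_eq_one (f : Fin M → β)
    (T : Finset (Fin M)) (hT : T.card = k) :
    ∑ φ ∈ univ.filter fun φ : Fin k ↪ Fin M => univ.map φ = T ∧ Monotone (f ∘ φ),
      (fiberFactorial (f ∘ φ) : K)⁻¹ = 1 := by
  rw [← filter_filter, sum_filter, sum_embedding_map_univ_eq_sum_perm T hT, ← sum_filter]
  exact sum_perm_monotone_inv_fiberFactorial_eq_one (f ∘ T.orderEmbOfFin hT)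

theorem sum_inv_fiberFactorial_eq_noninv {n : ℕ} (hk : k ≤ n) (f : Fin n → β)
    (τ : Equiv.Perm (Fin n)) :
    ∑ φ ∈ univ.filter fun φ : Fin k ↪ Fin n =>
        Monotone (f ∘ φ) ∧ StrictMonoOn ⇑τ⁻¹ ↑(univ.map φ)ᶜ,
      (fiberFactorial (f ∘ φ) : K)⁻¹ = noninv n (n - k) τ := by
  have hmaps : ∀ φ ∈ univ.filter fun φ : Fin k ↪ Fin n =>
      Monotone (f ∘ φ) ∧ StrictMonoOn ⇑τ⁻¹ ↑(univ.map φ)ᶜ,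
      (univ.map φ)ᶜ ∈ (univ : Finset (Fin n)).powerset.filter
        (fun s => s.card = n - k ∧ ∀ i ∈ s, ∀ j ∈ s, i < j → τ⁻¹ i < τ⁻¹ j) := by
    intro φ hφ
    simp only [mem_filter, mem_univ, true_and] at hφ
    simp only [mem_filter, mem_powerset, subset_univ, true_and]
    exact ⟨card_compl_map_univ φ (Nat.add_sub_cancel' hk), hφ.2⟩
  rw [noninv, ← sum_fiberwise_of_maps_to hmaps, card_eq_sum_ones, Nat.cast_sum]
  refine sum_congr rfl fun s hs => ?_
  simp only [mem_filter, mem_powerset, subset_univ, true_and] at hs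
  have hsc : sᶜ.card = k := by rw [card_compl, hs.1, Fintype.card_fin]; omega
  rw [Nat.cast_one, ← sum_monotone_embedding_inv_fiberFactorial_eq_one f sᶜ hsc, filter_filter]
  refine sum_congr (filter_congr fun φ _ => ?_) fun _ _ => rfl
  constructor
  · rintro ⟨⟨hmono, -⟩, rfl⟩
    exact ⟨(compl_compl _).symm, hmono⟩
  · rintro ⟨hφ, hmono⟩
    rw [hφ, compl_compl]
    exact ⟨⟨hmono, hs.2⟩, rfl⟩

end Rearrangements

theorem nuOp_single_ofFn {n k : ℕ} (hk : k ≤ n) (f : Fin n → Fin n) :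
    nuOp n k (Finsupp.single (List.ofFn f) 1) =
      ∑ φ ∈ univ.filter fun φ : Fin k ↪ Fin n => Monotone (f ∘ φ),
        ∑ τ ∈ univ.filter fun τ : Equiv.Perm (Fin n) => StrictMonoOn ⇑τ⁻¹ ↑(univ.map φ)ᶜ,
          (fiberFactorial (f ∘ φ) : ℂ)⁻¹ • Finsupp.single (List.ofFn (f ∘ τ)) 1 := by
  rw [nuOp, LinearMap.sum_apply]
  simp_rw [LinearMap.smul_apply, LinearMap.comp_apply,
    shChain_delChain_single_ofFn _ f (Nat.add_sub_cancel' hk), smul_sum]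
  rw [← sum_fiberwise_of_maps_to (g := fun φ : Fin k ↪ Fin n => f ∘ φ)
    (t := univ.filter fun a : Fin k → Fin n => Monotone a) (fun φ hφ => by simpa using hφ)]
  refine sum_congr rfl fun a ha => ?_
  simp only [mem_filter, mem_univ, true_and] at ha
  rw [filter_filter]
  refine sum_congr (filter_congr fun φ _ => ⟨fun hφ => ⟨hφ ▸ ha, hφ⟩, And.right⟩) fun φ hφ => ?_
  simp only [mem_filter, mem_univ, true_and] at hφ
  rw [hφ.2]
  rfl

/-- The symmetrized shuffling operator `ν_k`, defined on words of length `n` by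
`ν_k(w) = Σ_{τ ∈ S_n} noninv_{n−k}(τ)·(w·τ)`, coincides with
`Σ_{1 ≤ a₁ ≤ ⋯ ≤ a_k ≤ n} (1/∏_j #{l : a_l = j}!)·sh_{a₁}∘⋯∘sh_{a_k}∘∂_{a₁}∘⋯∘∂_{a_k}`. -/
theorem nuOp_eq_sum_noninv (n k : ℕ) (hk : k ≤ n) (w : List (Fin n)) (hw : w.length = n) :
    nuOp n k (Finsupp.single w 1)
      = ∑ τ : Equiv.Perm (Fin n), (noninv n (n - k) τ : ℂ) •
          Finsupp.single (List.ofFn fun i => w.get (Fin.cast hw.symm (τ i))) 1 := by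
  set f : Fin n → Fin n := fun i => w.get (Fin.cast hw.symm i)
  have hw' : List.ofFn f = w := (List.ofFn_congr hw w.get).symm.trans (List.ofFn_get w)
  conv_lhs => rw [← hw', nuOp_single_ofFn hk]
  rw [sum_comm' (t' := univ) (s' := fun τ : Equiv.Perm (Fin n) =>
    univ.filter fun φ : Fin k ↪ Fin n => Monotone (f ∘ φ) ∧ StrictMonoOn ⇑τ⁻¹ ↑(univ.map φ)ᶜ)
    (by simp)]
  refine sum_congr rfl fun τ _ => ?_
  rw [← sum_smul, sum_inv_fiberFactorial_eq_noninv hk]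
  rfl
end

section
/- On the word algebra CA^n, the identity Σ_{a=1}^{n} sh_a ∘ ν_{k−1} ∘ ∂_a = k · ν_k holds, where ν_{k−1} here acts on words of length n−1. -/
open Finset

section Words

variable {A : Type}

noncomputable def consOp (c : A) : (List A →₀ ℂ) →ₗ[ℂ] (List A →₀ ℂ) :=
  Finsupp.lmapDomain ℂ ℂ (List.cons c)

lemma consOp_single (c : A) (w : List A) (r : ℂ) :
    consOp c (Finsupp.single w r) = Finsupp.single (c :: w) r := by
  simp [consOp]

variable [DecidableEq A]

lemma shOp_single_nil (a : A) : shOp A a (Finsupp.single [] 1) = Finsupp.single [a] 1 := by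
  simp [shOp]

lemma delOp_single_nil (a : A) : delOp A a (Finsupp.single [] 1) = 0 := by
  simp [delOp]

lemma shOp_comp_consOp (a c : A) :
    shOp A a ∘ₗ consOp c = consOp a ∘ₗ consOp c + consOp c ∘ₗ shOp A a := by
  refine Finsupp.lhom_ext' fun w => LinearMap.ext_ring ?_
  simp only [LinearMap.comp_apply, LinearMap.add_apply, Finsupp.lsingle_apply, consOp_single,
    shOp, Finsupp.lift_apply, Finsupp.sum_single_index, zero_smul, one_smul, map_sum]
  rw [List.length_cons, Fin.sum_univ_succ]
  simp

lemma shOp_consOp (a c : A) (x : List A →₀ ℂ) :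
    shOp A a (consOp c x) = consOp a (consOp c x) + consOp c (shOp A a x) :=
  LinearMap.congr_fun (shOp_comp_consOp a c) x

lemma delOp_consOp (a c : A) (x : List A →₀ ℂ) :
    delOp A a (consOp c x) = (if c = a then x else 0) + consOp c (delOp A a x) := by
  have key : delOp A a ∘ₗ consOp c
      = (if c = a then LinearMap.id else 0) + consOp c ∘ₗ delOp A a := by
    refine Finsupp.lhom_ext' fun w => LinearMap.ext_ring ?_
    simp only [LinearMap.comp_apply, LinearMap.add_apply, Finsupp.lsingle_apply, consOp_single,
      delOp, Finsupp.lift_apply, Finsupp.sum_single_index, zero_smul, one_smul, map_sum]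
    simp only [List.length_cons, Fin.sum_univ_succ]
    rcases eq_or_ne c a with rfl | h <;> simp [*, apply_ite (consOp c), consOp_single]
  have := LinearMap.congr_fun key x
  split_ifs at this ⊢ <;> simpa using this

lemma shOp_comm (a b : A) : shOp A a ∘ₗ shOp A b = shOp A b ∘ₗ shOp A a := by
  refine Finsupp.lhom_ext' fun w => LinearMap.ext_ring ?_
  simp only [LinearMap.comp_apply, Finsupp.lsingle_apply]
  induction w with
  | nil =>
    simp only [shOp_single_nil, ← consOp_single, shOp_consOp]
    abel
  | cons c w ih =>
    simp only [← consOp_single, shOp_consOp, map_add, ih]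
    abel

lemma delOp_comm (a b : A) : delOp A a ∘ₗ delOp A b = delOp A b ∘ₗ delOp A a := by
  refine Finsupp.lhom_ext' fun w => LinearMap.ext_ring ?_
  simp only [LinearMap.comp_apply, Finsupp.lsingle_apply]
  induction w with
  | nil => simp only [delOp_single_nil, map_zero]
  | cons c w ih =>
    simp only [← consOp_single, delOp_consOp, map_add, ih]
    split_ifs <;> subst_vars <;> simp

end Words

section Chains

variable {A : Type} [DecidableEq A]

lemma shChain_cons (c : A) (l : List A) : shChain A (c :: l) = shOp A c ∘ₗ shChain A l := rfl

lemma delChain_cons (c : A) (l : List A) : delChain A (c :: l) = delOp A c ∘ₗ delChain A l := rfl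

lemma delChain_singleton (c : A) : delChain A [c] = delOp A c := rfl

lemma shChain_perm {l₁ l₂ : List A} (h : l₁.Perm l₂) : shChain A l₁ = shChain A l₂ := by
  induction h with
  | nil => rfl
  | cons x _ ih => rw [shChain_cons, shChain_cons, ih]
  | swap x y l =>
    simp only [shChain_cons, ← LinearMap.comp_assoc, shOp_comm]
  | trans _ _ ih₁ ih₂ => rw [ih₁, ih₂]

lemma delChain_perm {l₁ l₂ : List A} (h : l₁.Perm l₂) : delChain A l₁ = delChain A l₂ := by
  induction h with
  | nil => rfl
  | cons x _ ih => rw [delChain_cons, delChain_cons, ih]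
  | swap x y l =>
    simp only [delChain_cons, ← LinearMap.comp_assoc, delOp_comm]
  | trans _ _ ih₁ ih₂ => rw [ih₁, ih₂]

lemma delChain_append (l₁ l₂ : List A) :
    delChain A (l₁ ++ l₂) = delChain A l₁ ∘ₗ delChain A l₂ := by
  induction l₁ with
  | nil => simp [delChain]
  | cons c l ih =>
    rw [List.cons_append, delChain_cons, delChain_cons, ih, LinearMap.comp_assoc]

noncomputable def shDelOp (s : Multiset A) : (List A →₀ ℂ) →ₗ[ℂ] (List A →₀ ℂ) :=
  shChain A s.toList ∘ₗ delChain A s.toList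

lemma shDelOp_coe (l : List A) : shDelOp (l : Multiset A) = shChain A l ∘ₗ delChain A l := by
  have h : (l : Multiset A).toList.Perm l := Multiset.coe_eq_coe.mp (Multiset.coe_toList _)
  rw [shDelOp, shChain_perm h, delChain_perm h]

lemma shOp_comp_shDelOp_comp_delOp (a : A) (s : Multiset A) :
    shOp A a ∘ₗ shDelOp s ∘ₗ delOp A a = shDelOp (a ::ₘ s) := by
  rw [← Multiset.coe_toList s, Multiset.cons_coe, shDelOp_coe, shDelOp_coe,
    delChain_perm (List.perm_append_singleton a _).symm, delChain_append, shChain_cons,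
    delChain_singleton, LinearMap.comp_assoc, LinearMap.comp_assoc]

end Chains

section Tuples

variable {α : Type*} [LinearOrder α] {k : ℕ}

def Sym.sortedTuple (s : Sym α k) (i : Fin k) : α :=
  (s.1.sort (· ≤ ·))[i.1]'(by simp)

lemma Sym.monotone_sortedTuple (s : Sym α k) : Monotone s.sortedTuple := fun _ _ hij =>
  (Multiset.pairwise_sort s.1 (· ≤ ·)).rel_get_of_le (Fin.mk_le_mk.mpr hij)

lemma Sym.coe_ofFn_sortedTuple (s : Sym α k) : (List.ofFn s.sortedTuple : Multiset α) = s := by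
  have : List.ofFn s.sortedTuple = s.1.sort (· ≤ ·) :=
    List.ext_getElem (by simp) fun i _ _ => by simp [Sym.sortedTuple]
  rw [this, Multiset.sort_eq]
  rfl

def Sym.equivMonotoneTuple (k : ℕ) : Sym α k ≃ {a : Fin k → α // Monotone a} where
  toFun s := ⟨s.sortedTuple, s.monotone_sortedTuple⟩
  invFun a := ⟨List.ofFn a.1, by simp⟩
  left_inv s := Subtype.ext s.coe_ofFn_sortedTuple
  right_inv a := Subtype.ext <| List.ofFn_injective <| List.Perm.eq_of_sortedLE
    (Sym.monotone_sortedTuple _).sortedLE_ofFn a.2.sortedLE_ofFn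
    (Multiset.coe_eq_coe.mp (Sym.coe_ofFn_sortedTuple _))

end Tuples

lemma card_filter_eq_count {α : Type*} [DecidableEq α] {k : ℕ} (a : Fin k → α) (j : α) :
    #{l | a l = j} = Multiset.count j (List.ofFn a : Multiset α) := by
  rw [← Fin.univ_val_map, Multiset.count_map, ← Finset.filter_val, Finset.card_val]
  simp [eq_comm]

section Weights

variable {α : Type*} [Fintype α] [DecidableEq α]

noncomputable def symWeight (s : Multiset α) : ℂ :=
  ((∏ j, (s.count j).factorial : ℕ) : ℂ)⁻¹

lemma prod_factorial_count_cons (a : α) (s : Multiset α) :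
    ∏ j, ((a ::ₘ s).count j).factorial = (s.count a + 1) * ∏ j, (s.count j).factorial := by
  rw [Fintype.prod_eq_mul_prod_compl a,
    Fintype.prod_eq_mul_prod_compl a fun j => (s.count j).factorial,
    Multiset.count_cons_self, Nat.factorial_succ, mul_assoc]
  congr 2
  refine Finset.prod_congr rfl fun j hj => ?_
  rw [Multiset.count_cons_of_ne (by simpa using hj)]

lemma count_cons_self_mul_symWeight_cons (a : α) (s : Multiset α) :
    ((a ::ₘ s).count a : ℂ) * symWeight (a ::ₘ s) = symWeight s := by
  rw [symWeight, symWeight, prod_factorial_count_cons, Multiset.count_cons_self]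
  push_cast
  rw [mul_inv, ← mul_assoc, mul_inv_cancel₀ (Nat.cast_add_one_ne_zero _), one_mul]

end Weights

lemma Sym.sum_cons_eq_sum {α M : Type*} [Fintype α] [DecidableEq α] [AddCommMonoid M] {k : ℕ}
    (a : α) {f : Sym α (k + 1) → M} (hf : ∀ t : Sym α (k + 1), a ∉ t → f t = 0) :
    ∑ s : Sym α k, f (a ::ₛ s) = ∑ t, f t := by
  refine Fintype.sum_of_injective _ (fun s s' => (Sym.cons_inj_right a s s').mp) _ _
    (fun t ht => hf t fun h => ?_) fun _ => rfl
  obtain ⟨s, rfl⟩ := Sym.exists_cons_of_mem h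
  exact ht ⟨s, rfl⟩

lemma nuOp_eq_sum_sym (n k : ℕ) :
    nuOp n k = ∑ s : Sym (Fin n) k,
      symWeight (s : Multiset (Fin n)) • shDelOp (s : Multiset (Fin n)) := by
  rw [nuOp, Finset.sum_subtype _ (p := Monotone) (fun a => by simp),
    ← (Sym.equivMonotoneTuple k).symm.sum_comp]
  refine Fintype.sum_congr _ _ fun a => ?_
  simp only [card_filter_eq_count]
  change _ = symWeight (List.ofFn a.1 : Multiset (Fin n)) •
    shDelOp (List.ofFn a.1 : Multiset (Fin n))
  rw [shDelOp_coe, symWeight]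

lemma shOp_comp_nuOp_comp_delOp (n k : ℕ) (a : Fin n) :
    shOp (Fin n) a ∘ₗ nuOp n k ∘ₗ delOp (Fin n) a
      = ∑ t : Sym (Fin n) (k + 1),
          (((t : Multiset (Fin n)).count a : ℂ) * symWeight (t : Multiset (Fin n))) •
            shDelOp (t : Multiset (Fin n)) := by
  rw [← Sym.sum_cons_eq_sum a fun t ht => by
    rw [Multiset.count_eq_zero_of_notMem (Sym.mem_coe.not.mpr ht), Nat.cast_zero, zero_mul,
      zero_smul]]
  simp only [nuOp_eq_sum_sym, ← Module.End.mul_eq_comp, Finset.sum_mul, Finset.mul_sum,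
    smul_mul_assoc, mul_smul_comm]
  refine Fintype.sum_congr _ _ fun s => ?_
  rw [Module.End.mul_eq_comp, Module.End.mul_eq_comp, shOp_comp_shDelOp_comp_delOp,
    Sym.coe_cons, count_cons_self_mul_symWeight_cons]

theorem sum_shOp_comp_nuOp_comp_delOp (n k : ℕ) :
    ∑ a : Fin n, shOp (Fin n) a ∘ₗ nuOp n k ∘ₗ delOp (Fin n) a
      = ((k + 1 : ℕ) : ℂ) • nuOp n (k + 1) := by
  simp only [shOp_comp_nuOp_comp_delOp]
  rw [Finset.sum_comm, nuOp_eq_sum_sym, Finset.smul_sum]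
  refine Finset.sum_congr rfl fun t _ => ?_
  rw [← Finset.sum_smul, ← Finset.sum_mul, ← Nat.cast_sum,
    Multiset.sum_count_eq_card fun a _ => Finset.mem_univ a, Sym.card_coe, smul_smul]

theorem sum_sh_nu_del_general (n k : ℕ) (hk : 1 ≤ k) (w : List (Fin n)) :
    (∑ a : Fin n, (shOp (Fin n) a).comp ((nuOp n (k-1)).comp (delOp (Fin n) a)))
        (Finsupp.single w 1)
      = (k : ℂ) • nuOp n k (Finsupp.single w 1) := by
  obtain ⟨k, rfl⟩ := Nat.exists_eq_add_of_le' hk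
  rw [Nat.add_sub_cancel, sum_shOp_comp_nuOp_comp_delOp, LinearMap.smul_apply]

/-- On the word algebra (restricted to words of length `n`),
`Σ_{a=1}^{n} sh_a ∘ ν_{k−1} ∘ ∂_a = k · ν_k`. -/
theorem sum_sh_nu_del (n k : ℕ) (hk : 1 ≤ k) (w : List (Fin n)) (hw : w.length = n) :
    (∑ a : Fin n, (shOp (Fin n) a).comp ((nuOp n (k-1)).comp (delOp (Fin n) a)))
        (Finsupp.single w 1)
      = (k : ℂ) • nuOp n k (Finsupp.single w 1) :=
  sum_sh_nu_del_general n k hk w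
end

section
/- For the symmetrized shuffling operator ν_k on S_n, the sum of the entries in each row of its matrix equals C(n,k)² · k!, i.e. Σ_{τ ∈ S_n} noninv_{n−k}(σ⁻¹τ) = C(n,k)²·k! for every σ ∈ S_n. -/
/-!
Put `ρ = (σ⁻¹τ)⁻¹`; the row sum then counts pairs `(s, ρ)` with `#s = n - k` and `ρ` increasing
on `s`. Sort them by `t = ρ '' s`: on `s` the permutation `ρ` must be the unique increasing
bijection `s → t`, while on `sᶜ` it is an arbitrary bijection `sᶜ → tᶜ`. This gives
`C(n, k)` choices for each of `s` and `t` and `k!` choices for `ρ`.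
-/

open Finset

namespace Equiv

variable {α : Type*} {p q : α → Prop} [DecidablePred p] [DecidablePred q]
  (e : {x // p x} ≃ {x // q x}) (f : {x // ¬p x} ≃ {x // ¬q x})

theorem subtypeCongr_apply_of_pos {a : α} (h : p a) : e.subtypeCongr f a = e ⟨a, h⟩ := by
  simp [subtypeCongr, sumCompl_symm_apply_of_pos h]

theorem subtypeCongr_apply_of_neg {a : α} (h : ¬p a) : e.subtypeCongr f a = f ⟨a, h⟩ := by
  simp [subtypeCongr, sumCompl_symm_apply_of_neg h]

end Equiv

theorem Finset.map_equiv_eq_iff {α β : Type*} {e : α ≃ β} {s : Finset α} {t : Finset β} :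
    s.map e.toEmbedding = t ↔ ∀ x, x ∈ s ↔ e x ∈ t := by
  simp only [Finset.ext_iff, mem_map_equiv]
  exact ⟨fun h x => by simpa using h (e x), fun h y => by simpa using h (e.symm y)⟩

section IncreasingPerms

variable {α : Type*} [Fintype α] [LinearOrder α] {s t : Finset α}

noncomputable def Finset.orderIsoOfCardEq (h : #s = #t) : s ≃o t :=
  (s.orderIsoOfFin h).symm.trans (t.orderIsoOfFin rfl)

theorem StrictMonoOn.apply_eq_orderIsoOfCardEq {ρ : Equiv.Perm α} (hmono : StrictMonoOn ρ s)
    (hmaps : ∀ x, x ∈ s ↔ ρ x ∈ t) (h : #s = #t) (x : s) :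
    ρ x = s.orderIsoOfCardEq h x := by
  let f : s ≃ t := ρ.subtypeEquiv hmaps
  have hf : StrictMono f := fun x y hxy => hmono x.2 y.2 hxy
  rw [← Subsingleton.elim (hf.orderIsoOfSurjective f f.surjective) (s.orderIsoOfCardEq h)]
  simp [f]

noncomputable def permStrictMonoOnEquivCompl (h : #s = #t) :
    {ρ : Equiv.Perm α // StrictMonoOn ρ s ∧ ∀ x, x ∈ s ↔ ρ x ∈ t} ≃
      ({x // x ∉ s} ≃ {x // x ∉ t}) where
  toFun ρ := ρ.1.subtypeEquiv fun x => not_congr (ρ.2.2 x)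
  invFun g := ⟨(s.orderIsoOfCardEq h).toEquiv.subtypeCongr g, by
      intro x hx y hy hxy
      rw [Equiv.subtypeCongr_apply_of_pos _ _ hx, Equiv.subtypeCongr_apply_of_pos _ _ hy]
      exact (s.orderIsoOfCardEq h).strictMono (show (⟨x, hx⟩ : s) < ⟨y, hy⟩ from hxy), by
      intro x
      by_cases hx : x ∈ s
      · simp [Equiv.subtypeCongr_apply_of_pos _ _ hx, hx]
      · simpa [Equiv.subtypeCongr_apply_of_neg _ _ hx, hx] using (g ⟨x, hx⟩).2⟩
  left_inv := by
    rintro ⟨ρ, hmono, hmaps⟩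
    ext x
    by_cases hx : x ∈ s
    · simp [Equiv.subtypeCongr_apply_of_pos _ _ hx,
        hmono.apply_eq_orderIsoOfCardEq hmaps h ⟨x, hx⟩]
    · simp [Equiv.subtypeCongr_apply_of_neg _ _ hx]
  right_inv g := by
    ext x
    simp [Equiv.subtypeCongr_apply_of_neg _ _ x.2]

open scoped Classical in
theorem card_perm_strictMonoOn_mapsOnto (h : #s = #t) :
    #{ρ : Equiv.Perm α | StrictMonoOn ρ s ∧ ∀ x, x ∈ s ↔ ρ x ∈ t} =
      (Fintype.card α - #s).factorial := by
  have hcompl : Fintype.card {x // x ∉ s} = Fintype.card {x // x ∉ t} := by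
    simp [Fintype.card_subtype_compl, h]
  rw [← Fintype.card_subtype, Fintype.card_congr (permStrictMonoOnEquivCompl h),
    Fintype.card_equiv (Fintype.equivOfCardEq hcompl), Fintype.card_subtype_compl,
    Fintype.card_coe]

theorem card_perm_strictMonoOn (s : Finset α)
    [DecidablePred fun ρ : Equiv.Perm α => StrictMonoOn ρ s] :
    #{ρ : Equiv.Perm α | StrictMonoOn ρ s} =
      (Fintype.card α).choose #s * (Fintype.card α - #s).factorial := by
  rw [card_eq_sum_card_fiberwise (f := fun ρ => s.map ρ.toEmbedding)
    (t := powersetCard #s univ) (fun ρ _ => by simp)]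
  have hfiber : ∀ t ∈ powersetCard #s univ,
      #{ρ ∈ {ρ : Equiv.Perm α | StrictMonoOn ρ s} | s.map ρ.toEmbedding = t} =
        (Fintype.card α - #s).factorial := fun t ht => by
    classical
    rw [filter_filter]
    simp_rw [map_equiv_eq_iff]
    convert card_perm_strictMonoOn_mapsOnto (mem_powersetCard.1 ht).2.symm
  rw [sum_congr rfl hfiber, sum_const, card_powersetCard, card_univ, smul_eq_mul]

end IncreasingPerms

open scoped Classical in
theorem noninv_eq_card_strictMonoOn (n m : ℕ) (π : Equiv.Perm (Fin n)) :
    noninv n m π = #{s ∈ powersetCard m univ | StrictMonoOn ⇑π⁻¹ (s : Finset (Fin n))} := by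
  rw [noninv, powersetCard_eq_filter, filter_filter]
  rfl

/-- The sum of the entries in each row of the matrix of the symmetrized shuffling
operator `ν_k` on `S_n` equals `C(n,k)² · k!`:
`Σ_{τ ∈ S_n} noninv_{n−k}(σ⁻¹τ) = C(n,k)²·k!` for every `σ ∈ S_n`. -/
theorem nu_row_sum (n k : ℕ) (hk : k ≤ n) (σ : Equiv.Perm (Fin n)) :
    ∑ τ : Equiv.Perm (Fin n), noninv n (n - k) (σ⁻¹ * τ)
      = (n.choose k) ^ 2 * k.factorial := by
  classical
  calc ∑ τ : Equiv.Perm (Fin n), noninv n (n - k) (σ⁻¹ * τ)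
      = ∑ ρ : Equiv.Perm (Fin n),
          #{s ∈ powersetCard (n - k) univ | StrictMonoOn ρ (s : Finset (Fin n))} :=
        Fintype.sum_equiv ((Equiv.mulLeft σ⁻¹).trans (Equiv.inv _)) _ _ fun τ => by
          simp [noninv_eq_card_strictMonoOn]
    _ = ∑ s ∈ powersetCard (n - k) univ,
          #{ρ : Equiv.Perm (Fin n) | StrictMonoOn ρ (s : Finset (Fin n))} :=
        sum_card_bipartiteAbove_eq_sum_card_bipartiteBelow _
    _ = ∑ s ∈ powersetCard (n - k) univ, n.choose k * k.factorial :=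
        sum_congr rfl fun s hs => by
          rw [card_perm_strictMonoOn, Fintype.card_fin, (mem_powersetCard.1 hs).2,
            Nat.choose_symm hk, Nat.sub_sub_self hk]
    _ = (n.choose k) ^ 2 * k.factorial := by
        rw [sum_const, card_powersetCard, card_univ, Fintype.card_fin, Nat.choose_symm hk,
          smul_eq_mul, sq, mul_assoc]
end

section
/- Define v_k(i, n) = k!·C(i−2, k)·C(2n−i+1, k) for integers 2 ≤ i ≤ n. Then these numbers satisfy the recursion v_k(i, n) = v_k(i−1, n−1) + (2n − k − 1)·v_{k−1}(i−1, n−1) whenever i − 2 ≥ k ≥ 1, and v_k(i, n) = 0 whenever i − 2 < k. -/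
/-- `vEig k i n = k!·C(i−2, k)·C(2n−i+1, k)`, the eigenvalue of `ν_k` on the isotypic
component `(n−1,1)` indexed by the standard tableau with second-row entry `i`. -/
def vEig (k i n : ℕ) : ℕ :=
  k.factorial * ((i - 2).choose k) * ((2 * n - i + 1).choose k)

lemma vEig_key (m c d : ℕ) :
    (m+1).factorial * ((m+c+1).choose (m+1)) * ((m+d+1).choose (m+1)) =
    (m+1).factorial * ((m+c).choose (m+1)) * ((m+d).choose (m+1)) +
    (m+c+d+1) * (m.factorial * ((m+c).choose m) * ((m+d).choose m)) := by
  have hA := Nat.choose_succ_right_eq (m+c) m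
  have hB := Nat.choose_succ_right_eq (m+d) m
  rw [Nat.add_sub_cancel_left] at hA hB
  rw [Nat.choose_succ_succ (m+c) m, Nat.choose_succ_succ (m+d) m, Nat.factorial_succ]
  zify at hA hB ⊢
  linear_combination (m.factorial * ((m+d).choose m : ℤ)) * hA +
    ((m.factorial : ℤ) * ((m+c).choose m)) * hB

/-- The numbers `v_k(i,n) = k!·C(i−2,k)·C(2n−i+1,k)` (for `2 ≤ i ≤ n`) satisfy the
recursion `v_k(i,n) = v_k(i−1,n−1) + (2n−k−1)·v_{k−1}(i−1,n−1)` whenever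
`i − 2 ≥ k ≥ 1`, and vanish whenever `i − 2 < k`. -/
theorem vEig_recursion (n k i : ℕ) (h2 : 2 ≤ i) (hin : i ≤ n) :
    (1 ≤ k → k ≤ i - 2 →
      vEig k i n = vEig k (i - 1) (n - 1) + (2 * n - k - 1) * vEig (k - 1) (i - 1) (n - 1)) ∧
    (i - 2 < k → vEig k i n = 0) := by
  constructor
  · intro hk1 hk2
    obtain ⟨m, rfl⟩ : ∃ m, k = m + 1 := ⟨k - 1, by omega⟩
    obtain ⟨c, hc⟩ : ∃ c, i = m + c + 3 := ⟨i - m - 3, by omega⟩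
    obtain ⟨d, hd⟩ : ∃ d, 2 * n - i + 1 = m + d + 1 := ⟨2 * n - i - m, by omega⟩
    unfold vEig
    have e1 : i - 2 = m + c + 1 := by omega
    have e2 : i - 1 - 2 = m + c := by omega
    have e3 : 2 * (n - 1) - (i - 1) + 1 = m + d := by omega
    have e4 : 2 * n - (m + 1) - 1 = m + c + d + 1 := by omega
    have e5 : m + 1 - 1 = m := rfl
    rw [e1, e2, e3, e4, e5, hd]
    have := vEig_key m c d
    linarith [this]
  · intro h
    unfold vEig
    rw [Nat.choose_eq_zero_of_lt h]
    ring
end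

section
/- For fixed n and k with k ≥ 1, the sequence i ↦ k!·C(i−2, k)·C(2n−i+1, k) is monotone (weakly) increasing in i for 2 ≤ i ≤ n; in particular for k+2 ≤ i < n one has the strict inequality k!·C(i−2,k)·C(2n−i+1,k) < k!·C(i−1,k)·C(2n−i,k). -/
private lemma scalar_le (k a c : ℕ) (hkc : k ≤ c + 1) (hac : a ≤ c) :
    (a + 1 - k) * (c + 1) ≤ (a + 1) * (c + 1 - k) := by
  rcases le_or_gt k (a + 1) with hka | hka
  · zify [hka, hkc]; nlinarith
  · have : a + 1 - k = 0 := by omega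
    simp [this]

private lemma scalar_lt (k a c : ℕ) (hk : 1 ≤ k) (hka : k ≤ a) (hac : a < c) :
    (a + 1 - k) * (c + 1) < (a + 1) * (c + 1 - k) := by
  have hka1 : k ≤ a + 1 := by omega
  have hkc : k ≤ c + 1 := by omega
  zify [hka1, hkc]; nlinarith

private lemma step_le (k a c : ℕ) (hac : a ≤ c) :
    a.choose k * (c + 1).choose k ≤ (a + 1).choose k * c.choose k := by
  rcases le_or_gt k (c + 1) with hkc | hkc
  · have hpos : 0 < (a + 1) * (c + 1) := by positivity
    apply Nat.le_of_mul_le_mul_right _ hpos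
    calc a.choose k * (c + 1).choose k * ((a + 1) * (c + 1))
        = (a.choose k * (a + 1)) * ((c + 1).choose k * (c + 1)) := by ring
      _ = ((a + 1).choose k * (a + 1 - k)) * ((c + 1).choose k * (c + 1)) := by
          rw [Nat.choose_mul_succ_eq]
      _ = (a + 1).choose k * (c + 1).choose k * ((a + 1 - k) * (c + 1)) := by ring
      _ ≤ (a + 1).choose k * (c + 1).choose k * ((a + 1) * (c + 1 - k)) := by
          exact Nat.mul_le_mul_left _ (scalar_le k a c hkc hac)
      _ = ((a + 1).choose k * (a + 1)) * ((c + 1).choose k * (c + 1 - k)) := by ring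
      _ = ((a + 1).choose k * (a + 1)) * (c.choose k * (c + 1)) := by
          rw [Nat.choose_mul_succ_eq]
      _ = (a + 1).choose k * c.choose k * ((a + 1) * (c + 1)) := by ring
  · have : (c + 1).choose k = 0 := Nat.choose_eq_zero_of_lt hkc
    simp [this]

private lemma step_lt (k a c : ℕ) (hk : 1 ≤ k) (hka : k ≤ a) (hac : a < c) :
    a.choose k * (c + 1).choose k < (a + 1).choose k * c.choose k := by
  have hkc : k ≤ c + 1 := by omega
  have hpos : 0 < (a + 1) * (c + 1) := by positivity
  have hch1 : 0 < (a + 1).choose k := Nat.choose_pos (by omega)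
  have hch2 : 0 < (c + 1).choose k := Nat.choose_pos (by omega)
  have key : a.choose k * (c + 1).choose k * ((a + 1) * (c + 1))
      < (a + 1).choose k * c.choose k * ((a + 1) * (c + 1)) := by
    calc a.choose k * (c + 1).choose k * ((a + 1) * (c + 1))
        = (a.choose k * (a + 1)) * ((c + 1).choose k * (c + 1)) := by ring
      _ = ((a + 1).choose k * (a + 1 - k)) * ((c + 1).choose k * (c + 1)) := by
          rw [Nat.choose_mul_succ_eq]
      _ = (a + 1).choose k * (c + 1).choose k * ((a + 1 - k) * (c + 1)) := by ring
      _ < (a + 1).choose k * (c + 1).choose k * ((a + 1) * (c + 1 - k)) := by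
          exact mul_lt_mul_of_pos_left (scalar_lt k a c hk hka hac) (Nat.mul_pos hch1 hch2)
      _ = ((a + 1).choose k * (a + 1)) * ((c + 1).choose k * (c + 1 - k)) := by ring
      _ = ((a + 1).choose k * (a + 1)) * (c.choose k * (c + 1)) := by
          rw [Nat.choose_mul_succ_eq]
      _ = (a + 1).choose k * c.choose k * ((a + 1) * (c + 1)) := by ring
  exact Nat.lt_of_mul_lt_mul_right key

/-- For fixed `n` and `k ≥ 1`, the sequence `i ↦ k!·C(i−2,k)·C(2n−i+1,k)` is weakly
increasing in `i` for `2 ≤ i ≤ n`; and for `k+2 ≤ i < n` one has the strict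
inequality `k!·C(i−2,k)·C(2n−i+1,k) < k!·C(i−1,k)·C(2n−i,k)`. -/
theorem vEig_monotone (n k : ℕ) (hk : 1 ≤ k) :
    (∀ i j : ℕ, 2 ≤ i → i ≤ j → j ≤ n →
      k.factorial * ((i - 2).choose k) * ((2 * n - i + 1).choose k)
        ≤ k.factorial * ((j - 2).choose k) * ((2 * n - j + 1).choose k)) ∧
    (∀ i : ℕ, k + 2 ≤ i → i < n →
      k.factorial * ((i - 2).choose k) * ((2 * n - i + 1).choose k)
        < k.factorial * ((i - 1).choose k) * ((2 * n - i).choose k)) := by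
  have hstep : ∀ i : ℕ, 2 ≤ i → i < n →
      k.factorial * ((i - 2).choose k) * ((2 * n - i + 1).choose k)
        ≤ k.factorial * ((i + 1 - 2).choose k) * ((2 * n - (i + 1) + 1).choose k) := by
    intro i hi2 hin
    have ha : i + 1 - 2 = (i - 2) + 1 := by omega
    have hb : 2 * n - i + 1 = (2 * n - (i + 1) + 1) + 1 := by omega
    have hac : i - 2 ≤ 2 * n - (i + 1) + 1 := by omega
    rw [ha, hb, mul_assoc, mul_assoc]
    exact Nat.mul_le_mul_left _ (step_le k (i - 2) (2 * n - (i + 1) + 1) hac)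
  constructor
  · intro i j hi2 hij hjn
    induction j, hij using Nat.le_induction with
    | base => exact le_refl _
    | succ j hj ih =>
        exact le_trans (ih (by omega)) (hstep j (by omega) (by omega))
  · intro i hi hin
    have ha : i - 1 = (i - 2) + 1 := by omega
    have hb : 2 * n - i + 1 = (2 * n - i) + 1 := by omega
    have hka : k ≤ i - 2 := by omega
    have hac : i - 2 < 2 * n - i := by omega
    rw [ha, hb, mul_assoc, mul_assoc]
    have := step_lt k (i - 2) (2 * n - i) hk hka hac
    exact mul_lt_mul_of_pos_left this (Nat.factorial_pos k)
end
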